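/- (Combined finite-data performance bound) Let M_tar be a finite MDP with reward bounded by r_max and discount γ ∈ [0,1). Let M̃ be another MDP on the same state-action space with same reward, whose dynamics satisfy ||P̃(·|s,a) - P̂_tar(·|s,a)||_1 ≤ κ + ε for all (s,a), where P̂_tar is an empirical estimate of the true target dynamics P_tar satisfying ||P̂_tar(·|s,a) - P_tar(·|s,a)||_∞ ≤ sqrt((1/(2n)) ln(2C_2/δ)) for all (s,a) (with C_2 = |S×A×S|). Then for any policy π: J_{M̃}(π) - J_{M_tar}(π) ≥ - γ r_max (κ + ε)/(1-γ)² - C_1 sqrt((1/n) ln(2C_2/δ)), where C_1 = γ r_max |S| / (√2 (1-γ)²). -/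

import Mathlib

open Finset

/-- State distribution at time `t` induced by policy `pol` in the MDP with kernel `P`,
starting from initial distribution `init`. -/
noncomputable def visit {S A : Type*} [Fintype S] [Fintype A]
    (P : S → A → S → ℝ) (pol : S → A → ℝ) (init : S → ℝ) : ℕ → S → ℝ
  | 0 => init
  | (t + 1) => fun s' => ∑ s, ∑ a, visit P pol init t s * pol s a * P s a s'

/-- Discounted return of policy `pol` from initial distribution `init`. -/
noncomputable def ret {S A : Type*} [Fintype S] [Fintype A]
    (P : S → A → S → ℝ) (pol : S → A → ℝ) (init : S → ℝ) (r : S → A → ℝ) (γ : ℝ) : ℝ :=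
  ∑' t : ℕ, γ ^ t * ∑ s, visit P pol init t s * ∑ a, pol s a * r s a

section aux
variable {S A : Type*} [Fintype S] [Fintype A]
variable (P Q : S → A → S → ℝ) (pol : S → A → ℝ) (init : S → ℝ)

lemma visit_nonneg (hP : ∀ s a s', 0 ≤ P s a s') (hpol : ∀ s a, 0 ≤ pol s a)
    (hinit : ∀ s, 0 ≤ init s) : ∀ t s, 0 ≤ visit P pol init t s := by
  intro t
  induction t with
  | zero => exact hinit
  | succ t ih =>
      intro s'
      exact Finset.sum_nonneg fun s _ => Finset.sum_nonneg fun a _ =>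
        mul_nonneg (mul_nonneg (ih s) (hpol s a)) (hP s a s')

lemma visit_sum (hP_sum : ∀ s a, ∑ s', P s a s' = 1) (hpol_sum : ∀ s, ∑ a, pol s a = 1)
    (hinit_sum : ∑ s, init s = 1) : ∀ t, ∑ s, visit P pol init t s = 1 := by
  intro t
  induction t with
  | zero => exact hinit_sum
  | succ t ih =>
      show ∑ s', ∑ s, ∑ a, visit P pol init t s * pol s a * P s a s' = 1
      rw [Finset.sum_comm]
      have : ∀ s, ∑ s', ∑ a, visit P pol init t s * pol s a * P s a s'
          = visit P pol init t s := by
        intro s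
        rw [Finset.sum_comm]
        calc ∑ a, ∑ s', visit P pol init t s * pol s a * P s a s'
            = ∑ a, visit P pol init t s * pol s a * ∑ s', P s a s' := by
              simp [Finset.mul_sum]
          _ = visit P pol init t s := by
              simp only [hP_sum, mul_one, ← Finset.mul_sum, hpol_sum]
      rw [Finset.sum_congr rfl fun s _ => this s, ih]

lemma visit_l1 (D : ℝ)
    (hP_nonneg : ∀ s a s', 0 ≤ P s a s') (hP_sum : ∀ s a, ∑ s', P s a s' = 1)
    (hQ_nonneg : ∀ s a s', 0 ≤ Q s a s') (hQ_sum : ∀ s a, ∑ s', Q s a s' = 1)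
    (hpol_nonneg : ∀ s a, 0 ≤ pol s a) (hpol_sum : ∀ s, ∑ a, pol s a = 1)
    (hinit_nonneg : ∀ s, 0 ≤ init s) (hinit_sum : ∑ s, init s = 1)
    (hD : ∀ s a, ∑ s', |P s a s' - Q s a s'| ≤ D) :
    ∀ t, ∑ s, |visit P pol init t s - visit Q pol init t s| ≤ t * D := by
  intro t
  induction t with
  | zero =>
      show ∑ s, |init s - init s| ≤ _
      simp
  | succ t ih =>
      set ν1 := visit P pol init t with hν1
      set ν2 := visit Q pol init t with hν2
      have hν1n : ∀ s, 0 ≤ ν1 s := visit_nonneg P pol init hP_nonneg hpol_nonneg hinit_nonneg t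
      have hν1s : ∑ s, ν1 s = 1 := visit_sum P pol init hP_sum hpol_sum hinit_sum t
      calc ∑ s', |visit P pol init (t+1) s' - visit Q pol init (t+1) s'|
          ≤ ∑ s', ∑ s, ∑ a, |ν1 s * pol s a * P s a s' - ν2 s * pol s a * Q s a s'| := by
            refine Finset.sum_le_sum fun s' _ => ?_
            show |(∑ s, ∑ a, ν1 s * pol s a * P s a s') -
                ∑ s, ∑ a, ν2 s * pol s a * Q s a s'| ≤ _
            rw [← Finset.sum_sub_distrib]
            refine (Finset.abs_sum_le_sum_abs _ _).trans (Finset.sum_le_sum fun s _ => ?_)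
            rw [← Finset.sum_sub_distrib]
            exact Finset.abs_sum_le_sum_abs _ _
        _ = ∑ s, ∑ a, ∑ s', |ν1 s * pol s a * P s a s' - ν2 s * pol s a * Q s a s'| := by
            rw [Finset.sum_comm]
            exact Finset.sum_congr rfl fun s _ => Finset.sum_comm
        _ ≤ ∑ s, ∑ a, (ν1 s * pol s a * D + pol s a * |ν1 s - ν2 s|) := by
            refine Finset.sum_le_sum fun s _ => Finset.sum_le_sum fun a _ => ?_
            calc ∑ s', |ν1 s * pol s a * P s a s' - ν2 s * pol s a * Q s a s'|
                ≤ ∑ s', (ν1 s * pol s a * |P s a s' - Q s a s'|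
                    + pol s a * |ν1 s - ν2 s| * Q s a s') := by
                  refine Finset.sum_le_sum fun s' _ => ?_
                  have : ν1 s * pol s a * P s a s' - ν2 s * pol s a * Q s a s'
                      = ν1 s * pol s a * (P s a s' - Q s a s')
                        + pol s a * (ν1 s - ν2 s) * Q s a s' := by ring
                  rw [this]
                  refine (abs_add_le _ _).trans (add_le_add ?_ ?_)
                  · rw [abs_mul, abs_of_nonneg (mul_nonneg (hν1n s) (hpol_nonneg s a))]
                  · rw [abs_mul, abs_mul, abs_of_nonneg (hpol_nonneg s a),
                      abs_of_nonneg (hQ_nonneg s a s')]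
              _ = ν1 s * pol s a * (∑ s', |P s a s' - Q s a s'|)
                  + pol s a * |ν1 s - ν2 s| * (∑ s', Q s a s') := by
                  rw [Finset.sum_add_distrib, ← Finset.mul_sum, ← Finset.mul_sum]
              _ ≤ ν1 s * pol s a * D + pol s a * |ν1 s - ν2 s| := by
                  rw [hQ_sum, mul_one]
                  have := mul_le_mul_of_nonneg_left (hD s a)
                      (mul_nonneg (hν1n s) (hpol_nonneg s a))
                  linarith
        _ = D + ∑ s, |ν1 s - ν2 s| := by
            rw [Finset.sum_congr rfl fun s (_ : s ∈ Finset.univ) => Finset.sum_add_distrib]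
            rw [Finset.sum_add_distrib]
            congr 1
            · have h1 : ∀ s, ∑ a, ν1 s * pol s a * D = ν1 s * D := by
                intro s
                rw [← Finset.sum_mul, ← Finset.mul_sum, hpol_sum s, mul_one]
              rw [Finset.sum_congr rfl fun s _ => h1 s, ← Finset.sum_mul, hν1s, one_mul]
            · refine Finset.sum_congr rfl fun s _ => ?_
              rw [← Finset.sum_mul, hpol_sum, one_mul]
        _ ≤ D + t * D := by linarith [ih]
        _ = (t + 1 : ℕ) * D := by push_cast; ring

lemma ret_diff_bound (r : S → A → ℝ) (γ rmax D : ℝ)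
    (hγ0 : 0 ≤ γ) (hγ1 : γ < 1) (hrmax : 0 ≤ rmax) (hD0 : 0 ≤ D)
    (hP_nonneg : ∀ s a s', 0 ≤ P s a s') (hP_sum : ∀ s a, ∑ s', P s a s' = 1)
    (hQ_nonneg : ∀ s a s', 0 ≤ Q s a s') (hQ_sum : ∀ s a, ∑ s', Q s a s' = 1)
    (hpol_nonneg : ∀ s a, 0 ≤ pol s a) (hpol_sum : ∀ s, ∑ a, pol s a = 1)
    (hinit_nonneg : ∀ s, 0 ≤ init s) (hinit_sum : ∑ s, init s = 1)
    (hr : ∀ s a, |r s a| ≤ rmax)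
    (hD : ∀ s a, ∑ s', |P s a s' - Q s a s'| ≤ D) :
    |ret P pol init r γ - ret Q pol init r γ| ≤ rmax * D * (γ / (1 - γ) ^ 2) := by
  have hγn : ‖γ‖ < 1 := by rw [Real.norm_eq_abs, abs_of_nonneg hγ0]; exact hγ1
  set R : S → ℝ := fun s => ∑ a, pol s a * r s a with hR
  have hRb : ∀ s, |R s| ≤ rmax := by
    intro s
    calc |R s| ≤ ∑ a, |pol s a * r s a| := Finset.abs_sum_le_sum_abs _ _
      _ ≤ ∑ a, pol s a * rmax := by
          refine Finset.sum_le_sum fun a _ => ?_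
          rw [abs_mul, abs_of_nonneg (hpol_nonneg s a)]
          exact mul_le_mul_of_nonneg_left (hr s a) (hpol_nonneg s a)
      _ = rmax := by rw [← Finset.sum_mul, hpol_sum, one_mul]
  set f : ℕ → ℝ := fun t => γ ^ t * ∑ s, visit P pol init t s * R s with hf
  set g : ℕ → ℝ := fun t => γ ^ t * ∑ s, visit Q pol init t s * R s with hg
  have hbnd : ∀ (W : S → A → S → ℝ), (∀ s a s', 0 ≤ W s a s') → (∀ s a, ∑ s', W s a s' = 1) →
      ∀ t, |∑ s, visit W pol init t s * R s| ≤ rmax := by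
    intro W hWn hWs t
    calc |∑ s, visit W pol init t s * R s| ≤ ∑ s, |visit W pol init t s * R s| :=
          Finset.abs_sum_le_sum_abs _ _
      _ ≤ ∑ s, visit W pol init t s * rmax := by
          refine Finset.sum_le_sum fun s _ => ?_
          rw [abs_mul, abs_of_nonneg (visit_nonneg W pol init hWn hpol_nonneg hinit_nonneg t s)]
          exact mul_le_mul_of_nonneg_left (hRb s)
            (visit_nonneg W pol init hWn hpol_nonneg hinit_nonneg t s)
      _ = rmax := by rw [← Finset.sum_mul, visit_sum W pol init hWs hpol_sum hinit_sum, one_mul]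
  have hsumf : Summable f := by
    refine Summable.of_norm_bounded
      ((summable_geometric_of_lt_one hγ0 hγ1).mul_left rmax) fun t => ?_
    rw [Real.norm_eq_abs, hf, abs_mul, abs_pow, abs_of_nonneg hγ0]
    exact le_trans (mul_le_mul_of_nonneg_left (hbnd P hP_nonneg hP_sum t)
      (pow_nonneg hγ0 t)) (le_of_eq (mul_comm _ _))
  have hsumg : Summable g := by
    refine Summable.of_norm_bounded
      ((summable_geometric_of_lt_one hγ0 hγ1).mul_left rmax) fun t => ?_
    rw [Real.norm_eq_abs, hg, abs_mul, abs_pow, abs_of_nonneg hγ0]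
    exact le_trans (mul_le_mul_of_nonneg_left (hbnd Q hQ_nonneg hQ_sum t)
      (pow_nonneg hγ0 t)) (le_of_eq (mul_comm _ _))
  have hterm : ∀ t, |f t - g t| ≤ rmax * D * ((t : ℝ) * γ ^ t) := by
    intro t
    rw [hf, hg]
    simp only
    rw [← mul_sub, abs_mul, abs_pow, abs_of_nonneg hγ0, ← Finset.sum_sub_distrib]
    have h1 : |∑ s, (visit P pol init t s * R s - visit Q pol init t s * R s)|
        ≤ rmax * ((t : ℝ) * D) := by
      calc |∑ s, (visit P pol init t s * R s - visit Q pol init t s * R s)|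
          ≤ ∑ s, |(visit P pol init t s - visit Q pol init t s) * R s| := by
            refine (Finset.abs_sum_le_sum_abs _ _).trans (le_of_eq ?_)
            exact Finset.sum_congr rfl fun s _ => by rw [sub_mul]
        _ ≤ ∑ s, |visit P pol init t s - visit Q pol init t s| * rmax := by
            refine Finset.sum_le_sum fun s _ => ?_
            rw [abs_mul]
            exact mul_le_mul_of_nonneg_left (hRb s) (abs_nonneg _)
        _ ≤ (t : ℝ) * D * rmax := by
            rw [← Finset.sum_mul]
            exact mul_le_mul_of_nonneg_right
              (visit_l1 P Q pol init D hP_nonneg hP_sum hQ_nonneg hQ_sum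
                hpol_nonneg hpol_sum hinit_nonneg hinit_sum hD t) hrmax
        _ = rmax * ((t : ℝ) * D) := by ring
    calc γ ^ t * |∑ s, (visit P pol init t s * R s - visit Q pol init t s * R s)|
        ≤ γ ^ t * (rmax * ((t : ℝ) * D)) :=
          mul_le_mul_of_nonneg_left h1 (pow_nonneg hγ0 t)
      _ = rmax * D * ((t : ℝ) * γ ^ t) := by ring
  have hsumB : Summable (fun t : ℕ => rmax * D * ((t : ℝ) * γ ^ t)) := by
    have := summable_pow_mul_geometric_of_norm_lt_one 1 hγn (R := ℝ)
    simpa [pow_one] using this.mul_left (rmax * D)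
  have hsumfg : Summable (fun t => |f t - g t|) :=
    Summable.of_nonneg_of_le (fun t => abs_nonneg _) hterm hsumB
  have hdiff : ret P pol init r γ - ret Q pol init r γ = ∑' t, (f t - g t) :=
    (Summable.tsum_sub hsumf hsumg).symm
  rw [hdiff]
  calc |∑' t, (f t - g t)| ≤ ∑' t, |f t - g t| := by
        simpa [Real.norm_eq_abs] using
          norm_tsum_le_tsum_norm (f := fun t => f t - g t)
            (by simpa [Real.norm_eq_abs] using hsumfg)
    _ ≤ ∑' t : ℕ, rmax * D * ((t : ℝ) * γ ^ t) := Summable.tsum_le_tsum hterm hsumfg hsumB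
    _ = rmax * D * ∑' t : ℕ, (t : ℝ) * γ ^ t := by rw [tsum_mul_left]
    _ = rmax * D * (γ / (1 - γ) ^ 2) := by rw [tsum_coe_mul_geometric_of_norm_lt_one hγn]

end aux

/-- combined finite-data performance bound. -/
theorem finite_data_performance_bound
    {S A : Type*} [Fintype S] [Fintype A] [Nonempty S] [Nonempty A]
    (Ptilde Phattar Ptar : S → A → S → ℝ)
    (pol : S → A → ℝ) (init : S → ℝ) (r : S → A → ℝ)
    (γ κ ε rmax : ℝ) (hγ0 : 0 ≤ γ) (hγ1 : γ < 1)
    (hκ : 0 ≤ κ) (hε : 0 ≤ ε) (hrmax : 0 ≤ rmax)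
    (n : ℕ) (hn : 0 < n) (δ : ℝ) (hδ0 : 0 < δ) (hδ1 : δ < 1)
    (hPt_nonneg : ∀ s a s', 0 ≤ Ptilde s a s') (hPt_sum : ∀ s a, ∑ s', Ptilde s a s' = 1)
    (hPh_nonneg : ∀ s a s', 0 ≤ Phattar s a s') (hPh_sum : ∀ s a, ∑ s', Phattar s a s' = 1)
    (hPr_nonneg : ∀ s a s', 0 ≤ Ptar s a s') (hPr_sum : ∀ s a, ∑ s', Ptar s a s' = 1)
    (hpol_nonneg : ∀ s a, 0 ≤ pol s a) (hpol_sum : ∀ s, ∑ a, pol s a = 1)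
    (hinit_nonneg : ∀ s, 0 ≤ init s) (hinit_sum : ∑ s, init s = 1)
    (hr : ∀ s a, |r s a| ≤ rmax)
    -- corrected dynamics close to the empirical target dynamics in ℓ1
    (hl1 : ∀ s a, ∑ s', |Ptilde s a s' - Phattar s a s'| ≤ κ + ε)
    -- empirical target dynamics close to the true target dynamics in ℓ∞
    (hlinf : ∀ s a s', |Phattar s a s' - Ptar s a s'|
        ≤ Real.sqrt (1 / (2 * (n : ℝ)) *
            Real.log (2 * (Fintype.card (S × A × S) : ℝ) / δ))) :
    ret Ptilde pol init r γ - ret Ptar pol init r γ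
      ≥ - (γ * rmax * (κ + ε) / (1 - γ) ^ 2)
        - (γ * rmax * (Fintype.card S : ℝ) / (Real.sqrt 2 * (1 - γ) ^ 2)) *
            Real.sqrt (1 / (n : ℝ) *
              Real.log (2 * (Fintype.card (S × A × S) : ℝ) / δ)) := by
  set L : ℝ := Real.log (2 * (Fintype.card (S × A × S) : ℝ) / δ) with hL
  have hc : (1 : ℝ) ≤ (Fintype.card (S × A × S) : ℝ) := by
    exact_mod_cast Fintype.card_pos
  have hLnn : 0 ≤ L := by
    apply Real.log_nonneg
    rw [le_div_iff₀ hδ0]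
    nlinarith
  have hnn : (0 : ℝ) < (n : ℝ) := by exact_mod_cast hn
  have hx : 0 ≤ 1 / (n : ℝ) * L := by positivity
  have hσ : Real.sqrt (1 / (2 * (n : ℝ)) * L)
      = Real.sqrt (1 / (n : ℝ) * L) / Real.sqrt 2 := by
    rw [show 1 / (2 * (n : ℝ)) * L = (1 / (n : ℝ) * L) / 2 by ring]
    exact Real.sqrt_div hx 2
  have hσnn : 0 ≤ Real.sqrt (1 / (2 * (n : ℝ)) * L) := Real.sqrt_nonneg _
  have hB1 : |ret Ptilde pol init r γ - ret Phattar pol init r γ|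
      ≤ rmax * (κ + ε) * (γ / (1 - γ) ^ 2) :=
    ret_diff_bound Ptilde Phattar pol init r γ rmax (κ + ε) hγ0 hγ1 hrmax
      (by linarith) hPt_nonneg hPt_sum hPh_nonneg hPh_sum hpol_nonneg hpol_sum
      hinit_nonneg hinit_sum hr hl1
  have hD2 : ∀ s a, ∑ s', |Phattar s a s' - Ptar s a s'| ≤ (Fintype.card S : ℝ) * Real.sqrt (1 / (2 * (n : ℝ)) * L) := by
    intro s a
    calc ∑ s', |Phattar s a s' - Ptar s a s'| ≤ ∑ _s' : S, Real.sqrt (1 / (2 * (n : ℝ)) * L) :=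
          Finset.sum_le_sum fun s' _ => hlinf s a s'
      _ = (Fintype.card S : ℝ) * Real.sqrt (1 / (2 * (n : ℝ)) * L) := by
          rw [Finset.sum_const, Finset.card_univ, nsmul_eq_mul]
  have hB2 : |ret Phattar pol init r γ - ret Ptar pol init r γ|
      ≤ rmax * ((Fintype.card S : ℝ) * Real.sqrt (1 / (2 * (n : ℝ)) * L)) * (γ / (1 - γ) ^ 2) :=
    ret_diff_bound Phattar Ptar pol init r γ rmax ((Fintype.card S : ℝ) * Real.sqrt (1 / (2 * (n : ℝ)) * L)) hγ0 hγ1 hrmax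
      (by positivity) hPh_nonneg hPh_sum hPr_nonneg hPr_sum hpol_nonneg hpol_sum
      hinit_nonneg hinit_sum hr hD2
  have e1 : rmax * (κ + ε) * (γ / (1 - γ) ^ 2) = γ * rmax * (κ + ε) / (1 - γ) ^ 2 := by ring
  have e2 : rmax * ((Fintype.card S : ℝ) * Real.sqrt (1 / (2 * (n : ℝ)) * L)) * (γ / (1 - γ) ^ 2)
      = (γ * rmax * (Fintype.card S : ℝ) / (Real.sqrt 2 * (1 - γ) ^ 2)) *
          Real.sqrt (1 / (n : ℝ) * L) := by
    have h2 : Real.sqrt 2 ≠ 0 := by positivity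
    have hg : (1 - γ) ≠ 0 := by intro h; linarith [h]; 
    rw [hσ]; field_simp
  have h1 := abs_le.mp hB1
  have h2 := abs_le.mp hB2
  linarith [h1.1, h2.1, e1, e2]
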